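/- Let G be a finite graph and X^G its associated 2-Segal set. Then the Hall algebra of X^G is commutative: for all subgraphs H, K of G, 1_H * 1_K = 1_K * 1_H. -/

import Mathlib

/-!
Reversing the order of the two parts of a partitioned subgraph `(J; S₁, S₂)` is an involution
of `X^G_2`. Since `d₀` and `d₂` only remember the subgraph of `J` spanned by `S₂`, resp. `S₁`,
and `d₁` only remembers `J`, the involution exchanges `d₀` and `d₂` and fixes `d₁`; it therefore
matches the 2-simplices counted by the structure constant of `1_H * 1_K` with those counted by
`1_K * 1_H`.
-/

section GraphCore

variable {V : Type}

theorem telescope_iUnion {m : ℕ} (M : Fin (m + 1) → Set V) (hM : Antitone M) :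
    (⋃ j : Fin m, (M j.castSucc \ M j.succ)) = M 0 \ M (Fin.last m) := by
  ext x
  simp only [Set.mem_iUnion, Set.mem_diff]
  constructor
  · rintro ⟨j, hj1, hj2⟩
    refine ⟨hM (Fin.zero_le _) hj1, fun hx => hj2 (hM (Fin.le_last _) hx)⟩
  · rintro ⟨h0, hlast⟩
    by_contra hno
    push_neg at hno
    have hall : ∀ j : Fin (m + 1), x ∈ M j := by
      intro j
      induction j using Fin.induction with
      | zero => exact h0
      | succ j ih => exact (hno j ih)
    exact hlast (hall _)

theorem disjoint_layers {m : ℕ} (M : Fin (m + 1) → Set V) (hM : Antitone M) :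
    ∀ i j : Fin m, i ≠ j →
      Disjoint (M i.castSucc \ M i.succ) (M j.castSucc \ M j.succ) := by
  have key : ∀ i j : Fin m, i < j →
      Disjoint (M i.castSucc \ M i.succ) (M j.castSucc \ M j.succ) := by
    intro i j hij
    rw [Set.disjoint_left]
    rintro x ⟨_, hxi⟩ ⟨hxj, _⟩
    have : M j.castSucc ⊆ M i.succ := hM (by
      rw [Fin.succ_le_castSucc_iff]; exact hij)
    exact hxi (this hxj)
  intro i j hij
  rcases lt_or_gt_of_ne hij with h | h
  · exact key i j h
  · exact (key j i h).symm

/-- An `n`-simplex of the 2-Segal set `X^G` of a graph `G`: a subgraph `H`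
together with an ordered partition of its vertices into `n` possibly empty
parts. -/
@[ext]
structure GSimplex {V : Type} (G : SimpleGraph V) (n : ℕ) where
  H : G.Subgraph
  S : Fin n → Set V
  cover : (⋃ i, S i) = H.verts
  disj : ∀ i j : Fin n, i ≠ j → Disjoint (S i) (S j)

namespace GSimplex

variable {G : SimpleGraph V}

/-- The chain of "remaining" vertex sets of a partitioned subgraph:
`chain σ j` is the union of the parts with index `≥ j`. -/
def chain {n : ℕ} (σ : GSimplex G n) (j : Fin (n + 1)) : Set V :=
  ⋃ k : Fin n, if j ≤ k.castSucc then σ.S k else ∅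

theorem chain_antitone {n : ℕ} (σ : GSimplex G n) : Antitone σ.chain := by
  intro j j' hjj'
  refine Set.iUnion_subset fun k => ?_
  by_cases h : j' ≤ k.castSucc
  · simp only [h, if_pos]
    exact Set.subset_iUnion_of_subset k (by simp [hjj'.trans h])
  · simp [h]

theorem chain_zero {n : ℕ} (σ : GSimplex G n) : σ.chain 0 = σ.H.verts := by
  rw [← σ.cover]
  unfold chain

  ext k
  simp [Fin.zero_le]

theorem chain_last {n : ℕ} (σ : GSimplex G n) : σ.chain (Fin.last n) = ∅ := by
  unfold chain
  ext x
  simp only [Set.mem_iUnion, Set.mem_empty_iff_false, iff_false]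
  rintro ⟨k, hk⟩
  rw [if_neg] at hk
  · exact hk
  · exact not_le.mpr (Fin.castSucc_lt_last k)

/-- The action of a simplicial operator `α : [m] → [n]` on `X^G`:
the parts are merged or deleted according to `α`, and the subgraph is replaced
by its restriction (spanned subgraph) to the remaining vertices. -/
def act {m n : ℕ} (α : Fin (m + 1) → Fin (n + 1)) (hα : Monotone α)
    (σ : GSimplex G n) : GSimplex G m where
  H := σ.H.induce (σ.chain (α 0) \ σ.chain (α (Fin.last m)))
  S j := σ.chain (α j.castSucc) \ σ.chain (α j.succ)
  cover := by
    have := telescope_iUnion (fun j => σ.chain (α j)) (σ.chain_antitone.comp_monotone hα)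
    simpa using this
  disj := disjoint_layers (fun j => σ.chain (α j)) (σ.chain_antitone.comp_monotone hα)

/-- The `i`-th face map `X^G_{n+1} → X^G_n`. -/
def face {n : ℕ} (i : Fin (n + 2)) : GSimplex G (n + 1) → GSimplex G n :=
  act i.succAbove (Fin.strictMono_succAbove i).monotone

/-- The `i`-th degeneracy map `X^G_n → X^G_{n+1}`. -/
def degen {n : ℕ} (i : Fin (n + 1)) : GSimplex G n → GSimplex G (n + 1) :=
  act i.predAbove (Fin.predAbove_right_monotone i)

/-- The element of `X^G_1` corresponding to a subgraph `H` of `G`. -/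
def ofSubgraph (H : G.Subgraph) : GSimplex G 1 where
  H := H
  S := fun _ => H.verts
  cover := Set.iUnion_const _
  disj := fun i j hij => absurd (Subsingleton.elim i j) hij

end GSimplex

end GraphCore

namespace GSimplex

variable {V : Type} {G : SimpleGraph V}

def rev {n : ℕ} (σ : GSimplex G n) : GSimplex G n where
  H := σ.H
  S := σ.S ∘ Fin.rev
  cover := (Fin.rev_surjective.iUnion_comp σ.S).trans σ.cover
  disj _ _ hij := σ.disj _ _ (Fin.rev_injective.ne hij)

theorem rev_involutive {n : ℕ} : Function.Involutive (rev : GSimplex G n → GSimplex G n) :=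
  fun σ => GSimplex.ext rfl (funext fun i => congrArg σ.S (Fin.rev_rev i))

theorem eq_ofSubgraph (τ : GSimplex G 1) : τ = ofSubgraph τ.H := by
  have hS : τ.S 0 = τ.H.verts := (iSup_unique τ.S).symm.trans τ.cover
  exact GSimplex.ext rfl (funext fun i => by rw [Subsingleton.elim i 0, hS]; rfl)

theorem verts_eq_union (σ : GSimplex G 2) : σ.H.verts = σ.S 0 ∪ σ.S 1 := by
  rw [← σ.cover]
  ext
  simp [Fin.exists_fin_two]

theorem chain_one (σ : GSimplex G 2) : σ.chain 1 = σ.S 1 := by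
  ext
  simp [chain, Fin.exists_fin_two]

theorem face_zero (σ : GSimplex G 2) : face 0 σ = ofSubgraph (σ.H.induce (σ.S 1)) := by
  refine (eq_ofSubgraph _).trans (congrArg ofSubgraph ?_)
  show σ.H.induce (σ.chain 1 \ σ.chain (Fin.last 2)) = _
  rw [chain_one, chain_last, Set.sdiff_empty]

theorem face_one (σ : GSimplex G 2) : face 1 σ = ofSubgraph σ.H := by
  refine (eq_ofSubgraph _).trans (congrArg ofSubgraph ?_)
  show σ.H.induce (σ.chain 0 \ σ.chain (Fin.last 2)) = _
  rw [chain_zero, chain_last, Set.sdiff_empty, SimpleGraph.Subgraph.induce_self_verts]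

theorem face_two (σ : GSimplex G 2) : face 2 σ = ofSubgraph (σ.H.induce (σ.S 0)) := by
  refine (eq_ofSubgraph _).trans (congrArg ofSubgraph ?_)
  show σ.H.induce (σ.chain 0 \ σ.chain 1) = _
  rw [chain_zero, chain_one, verts_eq_union, Set.union_sdiff_right,
    (σ.disj 0 1 (by decide)).sdiff_eq_left]

theorem face_zero_rev (σ : GSimplex G 2) : face 0 σ.rev = face 2 σ := by
  rw [face_zero, face_two]; rfl

theorem face_one_rev (σ : GSimplex G 2) : face 1 σ.rev = face 1 σ := by
  rw [face_one, face_one]; rfl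

theorem face_two_rev (σ : GSimplex G 2) : face 2 σ.rev = face 0 σ := by
  rw [face_two, face_zero]; rfl

end GSimplex

theorem hall_graph_commutative_general {V : Type} (G : SimpleGraph V) :
    ∀ (H K : G.Subgraph) (b'' : GSimplex G 1),
      Nat.card {c : GSimplex G 2 //
          GSimplex.face 0 c = GSimplex.ofSubgraph H ∧
          GSimplex.face 2 c = GSimplex.ofSubgraph K ∧
          GSimplex.face 1 c = b''} =
      Nat.card {c : GSimplex G 2 //
          GSimplex.face 0 c = GSimplex.ofSubgraph K ∧
          GSimplex.face 2 c = GSimplex.ofSubgraph H ∧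
          GSimplex.face 1 c = b''} := by
  intro H K b''
  refine Nat.card_congr (GSimplex.rev_involutive.toPerm _ |>.subtypeEquiv fun c => ?_)
  rw [Function.Involutive.coe_toPerm, GSimplex.face_zero_rev, GSimplex.face_two_rev,
    GSimplex.face_one_rev, and_left_comm]

/-- For a finite graph `G`, the Hall algebra of the 2-Segal
set `X^G` is commutative: for all subgraphs `H, K` of `G` the structure
constants of `1_H * 1_K` and `1_K * 1_H` agree (the number of 2-simplices with
`d₀ = 1_H`, `d₂ = 1_K` and given `d₁` equals the number with `H` and `K`
exchanged). -/
theorem hall_graph_commutative {V : Type} [Fintype V] (G : SimpleGraph V) :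
    ∀ (H K : G.Subgraph) (b'' : GSimplex G 1),
      Nat.card {c : GSimplex G 2 //
          GSimplex.face 0 c = GSimplex.ofSubgraph H ∧
          GSimplex.face 2 c = GSimplex.ofSubgraph K ∧
          GSimplex.face 1 c = b''} =
      Nat.card {c : GSimplex G 2 //
          GSimplex.face 0 c = GSimplex.ofSubgraph K ∧
          GSimplex.face 2 c = GSimplex.ofSubgraph H ∧
          GSimplex.face 1 c = b''} :=
  hall_graph_commutative_general G
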